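/- Fix V > 0 and a Bond number B > 0, set κ := √B, λ*₁ := (4V/π)·[1 − 4I₂(κ)/(κ·I₁(κ))]^{−1}, and define h₁*(r) := (λ*₁/2)(1 − r²) − (λ*₁/(κ·I₁(κ)))·[I₀(κ) − I₀(κr)] for r ∈ [0,1]. Then: h₁*(1) = 0, h₁* is strictly decreasing on (0,1), h₁*(r) > 0 for all r ∈ [0,1), ∫_0^1 h₁*(r)·r dr = V/(2π) (so h₁* ∈ M_V), and the function −h₁* is not convex on [0,1]. -/

import Mathlib

/-- Modified Bessel function of the first kind of (natural) order `n`,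
`I_n(x) = sum_k (x/2)^(2k+n) / (k! * Gamma (k+n+1))`. -/
noncomputable def besselI (n : ℕ) (x : ℝ) : ℝ :=
  ∑' k : ℕ, (x / 2) ^ (2 * k + n) / ((k.factorial : ℝ) * Real.Gamma (k + n + 1))

/-!
With `a_k = (κ/2)^(2k) / (k!)²` we have `I₀(κ r) = ∑ a_k r^(2k)` and `κ I₁(κ) / 2 = ∑ k a_k`,
so `h₁*(r) = c ∑ a_k (k (1 - u) - (1 - u^k))` with `u = r²` and `c = λ*₁ / (κ I₁(κ))`.
Each summand is a Bernoulli defect: on `[0,1]` it is nonnegative, antitone in `u` (strictly for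
`k = 2`), zero at `u = 1` and at most `k (k - 1) / 2 · (1 - u)²`. Hence `h₁*` is positive and
strictly decreasing, and it vanishes to second order at `r = 1`, which a concave function with
`h₁*(0) > 0 = h₁*(1)` cannot do. Integrating termwise,
`∫₀¹ h₁*(r) r dr = c ∑ a_k k (k - 1) / (4 (k + 1)) = c (κ I₁(κ) - 4 I₂(κ)) / 8`;
this shows `4 I₂(κ) < κ I₁(κ)`, i.e. `λ*₁ > 0`, and gives the volume `V / (2π)`.
-/

open Finset Set Nat MeasureTheory

noncomputable section

def besselTerm (n : ℕ) (x : ℝ) (k : ℕ) : ℝ :=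
  (x / 2) ^ (2 * k + n) / ((k ! : ℝ) * (k + n)!)

lemma besselTerm_pos (n k : ℕ) {x : ℝ} (hx : 0 < x) : 0 < besselTerm n x k := by
  unfold besselTerm; positivity

lemma besselTerm_zero_nonneg (x : ℝ) (k : ℕ) : 0 ≤ besselTerm 0 x k := by
  unfold besselTerm
  rw [add_zero, pow_mul]
  positivity

lemma summable_besselTerm (n : ℕ) (x : ℝ) : Summable (besselTerm n x) := by
  refine Summable.of_norm_bounded
    ((Real.summable_pow_div_factorial ((x / 2) ^ 2)).mul_left (|x / 2| ^ n)) fun k => ?_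
  have hk : (1 : ℝ) ≤ (k + n)! := by exact_mod_cast (k + n).factorial_pos
  rw [besselTerm, norm_div, norm_pow, Real.norm_eq_abs, Real.norm_of_nonneg (by positivity),
    pow_add, pow_mul, sq_abs, mul_comm (_ ^ k), mul_div_assoc, div_mul_eq_div_div]
  exact mul_le_mul_of_nonneg_left (div_le_self (by positivity) hk) (by positivity)

lemma hasSum_besselTerm (n : ℕ) (x : ℝ) : HasSum (besselTerm n x) (besselI n x) := by
  convert (summable_besselTerm n x).hasSum using 1
  refine tsum_congr fun k => ?_
  rw [besselTerm, show (k : ℝ) + n + 1 = ((k + n : ℕ) : ℝ) + 1 by push_cast; ring,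
    Real.Gamma_nat_eq_factorial]

lemma besselI_pos (n : ℕ) {x : ℝ} (hx : 0 < x) : 0 < besselI n x :=
  hasSum_lt (f := 0) (fun k => (besselTerm_pos n k hx).le) (besselTerm_pos n 0 hx) hasSum_zero
    (hasSum_besselTerm n x)

lemma besselTerm_zero_mul (x r : ℝ) (k : ℕ) :
    besselTerm 0 (x * r) k = besselTerm 0 x k * (r ^ 2) ^ k := by
  simp only [besselTerm, add_zero, mul_div_right_comm x r, mul_pow, ← pow_mul]
  ring

lemma succ_mul_besselTerm_succ (n : ℕ) (x : ℝ) (k : ℕ) :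
    (k + 1) * besselTerm n x (k + 1) = x / 2 * besselTerm (n + 1) x k := by
  simp only [besselTerm, show k + 1 + n = k + n + 1 by ring,
    show 2 * (k + 1) + n = 2 * k + (n + 1) + 1 by ring, ← add_assoc, factorial_succ, pow_succ]
  push_cast
  field_simp

lemma add_succ_mul_besselTerm_succ (n : ℕ) (x : ℝ) (k : ℕ) :
    (k + n + 1) * besselTerm (n + 1) x k = x / 2 * besselTerm n x k := by
  simp only [besselTerm, ← add_assoc, factorial_succ, pow_succ]
  push_cast
  field_simp

lemma hasSum_nat_mul_besselTerm_zero (x : ℝ) :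
    HasSum (fun k : ℕ => k * besselTerm 0 x k) (x / 2 * besselI 1 x) := by
  rw [← hasSum_nat_add_iff' 1]
  simpa [succ_mul_besselTerm_succ] using (hasSum_besselTerm 1 x).mul_left (x / 2)

lemma hasSum_nat_mul_pred_mul_besselTerm_zero (x : ℝ) :
    HasSum (fun k : ℕ => k * (k - 1) * besselTerm 0 x k) ((x / 2) ^ 2 * besselI 2 x) := by
  rw [← hasSum_nat_add_iff' 2, sum_range_succ, sum_range_one]
  simp only [cast_zero, cast_one, zero_mul, sub_self, mul_zero, add_zero, sub_zero]
  refine ((hasSum_besselTerm 2 x).mul_left ((x / 2) ^ 2)).congr_fun fun k => ?_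
  have h0 := succ_mul_besselTerm_succ 0 x (k + 1)
  have h1 := succ_mul_besselTerm_succ 1 x k
  push_cast at h0 h1 ⊢
  linear_combination (k + 1 : ℝ) * h0 + (x / 2) * h1

lemma hasSum_nat_mul_besselTerm_zero_div_succ (x : ℝ) :
    HasSum (fun k : ℕ => k * besselTerm 0 x k / (k + 1)) (besselI 2 x) := by
  rw [← hasSum_nat_add_iff' 1, sum_range_one]
  simp only [cast_zero, zero_mul, zero_div, sub_zero]
  refine (hasSum_besselTerm 2 x).congr_fun fun k => ?_
  have h0 := succ_mul_besselTerm_succ 0 x k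
  have h1 := add_succ_mul_besselTerm_succ 1 x k
  push_cast at h0 h1 ⊢
  field_simp
  linear_combination h0 - h1

lemma natCast_mul_sub_one_nonneg (k : ℕ) : 0 ≤ (k : ℝ) * (k - 1) := by
  rcases k with _ | k
  · simp
  · push_cast
    rw [add_sub_cancel_right]
    positivity

lemma hasSum_besselTerm_zero_mul_nat_mul_pred_div (x : ℝ) :
    HasSum (fun k : ℕ => besselTerm 0 x k * (k * (k - 1) / (4 * (k + 1))))
      (x * besselI 1 x / 8 - besselI 2 x / 2) := by
  have h := ((hasSum_nat_mul_besselTerm_zero x).div_const 4).sub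
    ((hasSum_nat_mul_besselTerm_zero_div_succ x).div_const 2)
  rw [show x / 2 * besselI 1 x / 4 = x * besselI 1 x / 8 by ring] at h
  refine h.congr_fun fun k => ?_
  field_simp
  ring

lemma four_mul_besselI_two_lt {x : ℝ} (hx : 0 < x) : 4 * besselI 2 x < x * besselI 1 x := by
  have h : 0 < x * besselI 1 x / 8 - besselI 2 x / 2 := by
    refine hasSum_lt (i := 2) (fun k => ?_) ?_ hasSum_zero
      (hasSum_besselTerm_zero_mul_nat_mul_pred_div x)
    · exact mul_nonneg (besselTerm_zero_nonneg x k)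
        (div_nonneg (natCast_mul_sub_one_nonneg k) (by positivity))
    · exact mul_pos (besselTerm_pos 0 2 hx) (by norm_num)
  linarith

/-- The defect in Bernoulli's inequality `1 - u ^ k ≤ k (1 - u)`. -/
def bernoulliGap (k : ℕ) (u : ℝ) : ℝ := k * (1 - u) - (1 - u ^ k)

lemma bernoulliGap_antitoneOn (k : ℕ) : AntitoneOn (bernoulliGap k) (Icc 0 1) := by
  intro u ⟨hu0, _⟩ v ⟨_, hv1⟩ huv
  suffices v ^ k - u ^ k ≤ k * (v - u) by unfold bernoulliGap; linarith
  rw [← geom_sum₂_mul]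
  refine mul_le_mul_of_nonneg_right ?_ (sub_nonneg.2 huv)
  calc ∑ i ∈ range k, v ^ i * u ^ (k - 1 - i) ≤ ∑ _i ∈ range k, (1 : ℝ) :=
        sum_le_sum fun i _ => mul_le_one₀ (pow_le_one₀ (hu0.trans huv) hv1) (by positivity)
          (pow_le_one₀ hu0 (huv.trans hv1))
    _ = k := by simp

lemma bernoulliGap_nonneg (k : ℕ) {u : ℝ} (hu : u ∈ Icc (0 : ℝ) 1) : 0 ≤ bernoulliGap k u := by
  simpa [bernoulliGap] using bernoulliGap_antitoneOn k hu (right_mem_Icc.2 zero_le_one) hu.2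

lemma bernoulliGap_le (k : ℕ) {u : ℝ} (hu : u ∈ Icc (0 : ℝ) 1) :
    bernoulliGap k u ≤ k * (k - 1) / 2 * (1 - u) ^ 2 := by
  induction k with
  | zero => simp [bernoulliGap]
  | succ k ih =>
    have hstep : bernoulliGap (k + 1) u = bernoulliGap k u + (1 - u) * (1 - u ^ k) := by
      simp only [bernoulliGap]; push_cast; ring
    have hpow : (1 - u) * (1 - u ^ k) ≤ (1 - u) * (k * (1 - u)) :=
      mul_le_mul_of_nonneg_left (by linarith [bernoulliGap_nonneg k hu, bernoulliGap.eq_1 k u])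
        (sub_nonneg.2 hu.2)
    rw [hstep]
    push_cast
    nlinarith

lemma integral_bernoulliGap_sq_mul_self (k : ℕ) :
    ∫ r in (0 : ℝ)..1, bernoulliGap k (r ^ 2) * r = k * (k - 1) / (4 * (k + 1)) := by
  have h : ∀ r : ℝ, bernoulliGap k (r ^ 2) * r = (k - 1) * r - k * r ^ 3 + r ^ (2 * k + 1) := by
    intro r; simp only [bernoulliGap, pow_succ, pow_mul]; ring
  simp only [h]
  rw [intervalIntegral.integral_add, intervalIntegral.integral_sub,
    intervalIntegral.integral_const_mul, intervalIntegral.integral_const_mul, integral_id,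
    integral_pow, integral_pow]
  · push_cast; field_simp; ring
  all_goals exact Continuous.intervalIntegrable (by fun_prop) _ _

/-- `h₁*` is `λ*₁ / (κ I₁(κ))` times this function. -/
def besselProfile (κ r : ℝ) : ℝ :=
  (1 - r ^ 2) * (κ / 2 * besselI 1 κ) - (besselI 0 κ - besselI 0 (κ * r))

lemma hasSum_besselProfile (κ r : ℝ) :
    HasSum (fun k : ℕ => besselTerm 0 κ k * bernoulliGap k (r ^ 2)) (besselProfile κ r) := by
  have h := ((hasSum_nat_mul_besselTerm_zero κ).mul_left (1 - r ^ 2)).sub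
    ((hasSum_besselTerm 0 κ).sub (hasSum_besselTerm 0 (κ * r)))
  refine h.congr_fun fun k => ?_
  rw [besselTerm_zero_mul, bernoulliGap]
  ring

lemma besselProfile_strictAntiOn {κ : ℝ} (hκ : 0 < κ) :
    StrictAntiOn (besselProfile κ) (Icc 0 1) := by
  intro r ⟨hr0, _⟩ s ⟨_, hs1⟩ hrs
  have hsq : r ^ 2 < s ^ 2 := by gcongr
  have hs : s ^ 2 ≤ 1 := pow_le_one₀ (hr0.trans hrs.le) hs1
  refine hasSum_lt (i := 2) (fun k => ?_) ?_ (hasSum_besselProfile κ s) (hasSum_besselProfile κ r)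
  · exact mul_le_mul_of_nonneg_left
      (bernoulliGap_antitoneOn k ⟨sq_nonneg r, hsq.le.trans hs⟩ ⟨sq_nonneg s, hs⟩ hsq.le)
      (besselTerm_zero_nonneg κ k)
  · refine mul_lt_mul_of_pos_left ?_ (besselTerm_pos 0 2 hκ)
    simp only [bernoulliGap]
    push_cast
    nlinarith

lemma besselProfile_le_mul_sq (κ : ℝ) {r : ℝ} (hr : r ∈ Icc (0 : ℝ) 1) :
    besselProfile κ r ≤ κ ^ 2 * besselI 2 κ / 2 * (1 - r) ^ 2 := by
  have hr2 : r ^ 2 ∈ Icc (0 : ℝ) 1 := ⟨sq_nonneg r, pow_le_one₀ hr.1 hr.2⟩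
  have hsq : (1 - r ^ 2) ^ 2 ≤ 4 * (1 - r) ^ 2 := by
    have h : (1 + r) ^ 2 ≤ 4 := by nlinarith [hr.1, hr.2]
    calc (1 - r ^ 2) ^ 2 = (1 - r) ^ 2 * (1 + r) ^ 2 := by ring
      _ ≤ (1 - r) ^ 2 * 4 := mul_le_mul_of_nonneg_left h (sq_nonneg _)
      _ = 4 * (1 - r) ^ 2 := by ring
  calc besselProfile κ r ≤ (κ / 2) ^ 2 * besselI 2 κ * (2 * (1 - r) ^ 2) := by
        refine hasSum_le (fun k => ?_) (hasSum_besselProfile κ r)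
          ((hasSum_nat_mul_pred_mul_besselTerm_zero κ).mul_right (2 * (1 - r) ^ 2))
        have hk := natCast_mul_sub_one_nonneg k
        have hgap := bernoulliGap_le k hr2
        have ha := besselTerm_zero_nonneg κ k
        nlinarith [mul_le_mul_of_nonneg_left hsq (mul_nonneg hk ha)]
    _ = κ ^ 2 * besselI 2 κ / 2 * (1 - r) ^ 2 := by ring

lemma integral_besselProfile_mul_self (κ : ℝ) :
    ∫ r in (0 : ℝ)..1, besselProfile κ r * r = κ * besselI 1 κ / 8 - besselI 2 κ / 2 := by
  set F : ℕ → ℝ → ℝ := fun k r => besselTerm 0 κ k * (bernoulliGap k (r ^ 2) * r)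
  have hF (k : ℕ) : ∫ r in Ioc (0 : ℝ) 1, F k r =
      besselTerm 0 κ k * (k * (k - 1) / (4 * (k + 1))) := by
    rw [integral_const_mul, ← intervalIntegral.integral_of_le zero_le_one,
      integral_bernoulliGap_sq_mul_self]
  have hFnorm (k : ℕ) : ∫ r in Ioc (0 : ℝ) 1, ‖F k r‖ = ∫ r in Ioc (0 : ℝ) 1, F k r :=
    setIntegral_congr_fun measurableSet_Ioc fun r hr => Real.norm_of_nonneg <|
      mul_nonneg (besselTerm_zero_nonneg κ k) <|
        mul_nonneg (bernoulliGap_nonneg k ⟨sq_nonneg r, pow_le_one₀ hr.1.le hr.2⟩) hr.1.le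
  have hmoment := hasSum_besselTerm_zero_mul_nat_mul_pred_div κ
  have hsum :=
    hasSum_integral_of_summable_integral_norm (F := F) (μ := volume.restrict (Ioc 0 1))
    (fun k => (by unfold F bernoulliGap; fun_prop : Continuous (F k)).integrableOn_Ioc)
    (by simpa only [hFnorm, hF] using hmoment.summable)
  have hpt (r : ℝ) : besselProfile κ r * r = ∑' k, F k r := by
    simpa only [F, mul_assoc] using ((hasSum_besselProfile κ r).mul_right r).tsum_eq.symm
  rw [intervalIntegral.integral_of_le zero_le_one]
  simp only [hpt]
  exact hsum.unique (by simpa only [hF] using hmoment)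

theorem not_concaveOn_Icc_of_le_mul_sq {f : ℝ → ℝ} {C : ℝ} (h0 : 0 < f 0) (h1 : f 1 = 0)
    (hle : ∀ r ∈ Icc (0 : ℝ) 1, f r ≤ C * (1 - r) ^ 2) : ¬ ConcaveOn ℝ (Icc 0 1) f := by
  intro hf
  set ε := min 1 (f 0 / (|C| + 1))
  have hε : 0 < ε := lt_min one_pos (by positivity)
  have hε1 : ε ≤ 1 := min_le_left _ _
  have hCε : C * ε < f 0 := by
    calc C * ε ≤ |C| * (f 0 / (|C| + 1)) :=
          (mul_le_mul_of_nonneg_right (le_abs_self C) hε.le).trans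
            (mul_le_mul_of_nonneg_left (min_le_right _ _) (abs_nonneg C))
      _ < f 0 := by rw [mul_div_assoc', div_lt_iff₀ (by positivity)]; nlinarith [abs_nonneg C]
  have hconc := hf.2 (left_mem_Icc.2 zero_le_one) (right_mem_Icc.2 zero_le_one) hε.le
    (sub_nonneg.2 hε1) (add_sub_cancel ε 1)
  simp only [smul_eq_mul, h1, mul_zero, add_zero, mul_one, zero_add] at hconc
  have hbound := hle (1 - ε) ⟨sub_nonneg.2 hε1, by linarith⟩
  rw [sub_sub_cancel] at hbound
  nlinarith

end

theorem optimal_shape_radial_m_one (V B : ℝ) (hV : 0 < V) (hB : 0 < B)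
    (κ : ℝ) (hκ : κ = Real.sqrt B)
    (lam1 : ℝ)
    (hlam : lam1 = (4 * V / Real.pi) * (1 - 4 * besselI 2 κ / (κ * besselI 1 κ))⁻¹)
    (h1 : ℝ → ℝ)
    (hh1 : ∀ r : ℝ, h1 r = lam1 / 2 * (1 - r ^ 2) -
      lam1 / (κ * besselI 1 κ) * (besselI 0 κ - besselI 0 (κ * r))) :
    h1 1 = 0 ∧
    StrictAntiOn h1 (Set.Ioo 0 1) ∧
    (∀ r ∈ Set.Ico (0 : ℝ) 1, 0 < h1 r) ∧
    (∫ r in (0 : ℝ)..1, h1 r * r) = V / (2 * Real.pi) ∧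
    ¬ ConvexOn ℝ (Set.Icc (0 : ℝ) 1) (fun r => -h1 r) := by
  have hκ0 : 0 < κ := hκ ▸ Real.sqrt_pos.mpr hB
  have hI1 : 0 < besselI 1 κ := besselI_pos 1 hκ0
  have hgap : 0 < κ * besselI 1 κ - 4 * besselI 2 κ := sub_pos.2 (four_mul_besselI_two_lt hκ0)
  set c := 4 * V / Real.pi / (κ * besselI 1 κ - 4 * besselI 2 κ) with hc_def
  have hc : 0 < c := by positivity
  have hlamc : lam1 = c * (κ * besselI 1 κ) := by
    rw [hlam, hc_def]
    field_simp
  have hh1c (r : ℝ) : h1 r = c * besselProfile κ r := by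
    rw [hh1, hlamc, besselProfile]
    field_simp
  have hanti : StrictAntiOn h1 (Icc 0 1) := fun r hr s hs hrs => by
    simpa only [hh1c] using mul_lt_mul_of_pos_left (besselProfile_strictAntiOn hκ0 hr hs hrs) hc
  have hone : h1 1 = 0 := by simp [hh1]
  have hpos : ∀ r ∈ Ico (0 : ℝ) 1, 0 < h1 r := fun r hr =>
    hone ▸ hanti ⟨hr.1, hr.2.le⟩ (right_mem_Icc.2 zero_le_one) hr.2
  refine ⟨hone, hanti.mono Ioo_subset_Icc_self, hpos, ?_, ?_⟩
  · simp only [hh1c, mul_assoc]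
    rw [intervalIntegral.integral_const_mul, integral_besselProfile_mul_self, hc_def]
    field_simp
    ring
  · rw [show (fun r => -h1 r) = -h1 from rfl, neg_convexOn_iff]
    refine not_concaveOn_Icc_of_le_mul_sq (C := c * (κ ^ 2 * besselI 2 κ / 2))
      (hpos 0 (left_mem_Ico.2 zero_lt_one)) hone fun r hr => ?_
    rw [hh1c, mul_assoc]
    exact mul_le_mul_of_nonneg_left (besselProfile_le_mul_sq κ hr) hc.le
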